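/- The third derivative of the amplifier function at 0 equals −√(2/π)·(E[X⁴] − 3E[X²]); in particular, when X has unit variance, φ'''(0) is positive if and only if the excess kurtosis E[X⁴] − 3 is negative. -/

import Mathlib

open MeasureTheory Real

noncomputable def erf (x : ℝ) : ℝ := (2 / Real.sqrt π) * ∫ s in (0:ℝ)..x, Real.exp (-s ^ 2)

noncomputable def algInv (a : ℝ) : ℝ := a / Real.sqrt (1 - a ^ 2)

/-!
Write `φ = ψ ∘ algInv` with `ψ t = E[X erf(X t / √2)]`. Since `X` is bounded, `ψ` may be
differentiated under the expectation as often as we like: `ψ'(0) = √(2/π) E[X²]` and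
`ψ'''(0) = -√(2/π) E[X⁴]`. On the other side `algInv a = a + a³/2 + O(a⁵)`, so
`algInv'(0) = 1`, `algInv''(0) = 0`, `algInv'''(0) = 3`, and the third-order chain rule
(Faà di Bruno) gives `φ'''(0) = ψ'''(0) + 3 ψ'(0)`.
-/

open Filter Topology Set

theorem iteratedDeriv_three_comp {f f₁ f₂ g g₁ g₂ : ℝ → ℝ} {f₃ g₃ a : ℝ}
    (hf : ∀ᶠ t in 𝓝 (g a), HasDerivAt f (f₁ t) t)
    (hf₁ : ∀ᶠ t in 𝓝 (g a), HasDerivAt f₁ (f₂ t) t) (hf₂ : HasDerivAt f₂ f₃ (g a))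
    (hg : ∀ᶠ b in 𝓝 a, HasDerivAt g (g₁ b) b) (hg₁ : ∀ᶠ b in 𝓝 a, HasDerivAt g₁ (g₂ b) b)
    (hg₂ : HasDerivAt g₂ g₃ a) :
    iteratedDeriv 3 (f ∘ g) a =
      f₃ * g₁ a ^ 3 + 3 * f₂ (g a) * g₁ a * g₂ a + f₁ (g a) * g₃ := by
  have hg_tendsto : Tendsto g (𝓝 a) (𝓝 (g a)) := hg.self_of_nhds.continuousAt.tendsto
  have hfg := hg_tendsto.eventually hf
  have hf₁g := hg_tendsto.eventually hf₁
  have hderiv : deriv (f ∘ g) =ᶠ[𝓝 a] fun b => f₁ (g b) * g₁ b := by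
    filter_upwards [hfg, hg] with b hfb hgb using (hfb.comp b hgb).deriv
  have hderiv₂ : deriv (deriv (f ∘ g)) =ᶠ[𝓝 a]
      fun b => f₂ (g b) * g₁ b * g₁ b + f₁ (g b) * g₂ b := by
    filter_upwards [hderiv.eventuallyEq_nhds, hfg, hf₁g, hg, hg₁] with b hb hfb hf₁b hgb hg₁b
    rw [hb.deriv_eq]
    exact ((hf₁b.comp b hgb).mul hg₁b).deriv
  have hf₁a := hf₁.self_of_nhds.comp a hg.self_of_nhds
  have hf₂a := hf₂.comp a hg.self_of_nhds
  have hg₁a := hg₁.self_of_nhds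
  rw [iteratedDeriv_succ, iteratedDeriv_succ, iteratedDeriv_one, hderiv₂.deriv_eq]
  refine (((hf₂a.mul hg₁a).mul hg₁a).add (hf₁a.mul hg₂)).deriv.trans ?_
  simp only [Function.comp_apply, Pi.mul_apply]
  ring

theorem hasDerivAt_integral_of_continuous_of_ae_mem_compact {α : Type*} [TopologicalSpace α]
    [MeasurableSpace α] [OpensMeasurableSpace α] {μ : Measure α} [IsFiniteMeasure μ]
    {K : Set α} (hK : IsCompact K) (hμK : ∀ᵐ x ∂μ, x ∈ K) {F F' : ℝ → α → ℝ}
    (hF : Continuous fun p : ℝ × α => F p.1 p.2) (hF' : Continuous fun p : ℝ × α => F' p.1 p.2)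
    (hderiv : ∀ t x, HasDerivAt (F · x) (F' t x) t) (t₀ : ℝ) :
    HasDerivAt (fun t => ∫ x, F t x ∂μ) (∫ x, F' t₀ x ∂μ) t₀ := by
  obtain ⟨C, hC⟩ := ((isCompact_closedBall t₀ 1).prod hK).exists_bound_of_continuousOn
    hF'.continuousOn
  obtain ⟨C₀, hC₀⟩ :=
    hK.exists_bound_of_continuousOn (hF.comp (Continuous.prodMk_right t₀)).continuousOn
  have hmeas : ∀ t, AEStronglyMeasurable (F t) μ := fun t =>
    (hF.comp (Continuous.prodMk_right t)).aestronglyMeasurable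
  have hint : Integrable (F t₀) μ :=
    (integrable_const C₀).mono' (hmeas t₀) (hμK.mono fun x hx => hC₀ x hx)
  refine (hasDerivAt_integral_of_dominated_loc_of_deriv_le (Metric.closedBall_mem_nhds t₀ one_pos)
    (Eventually.of_forall hmeas) hint
    (hF'.comp (Continuous.prodMk_right t₀)).aestronglyMeasurable ?_ (integrable_const C)
    (ae_of_all _ fun x t _ => hderiv t x)).2
  filter_upwards [hμK] with x hx t ht using hC (t, x) ⟨ht, hx⟩

theorem hasDerivAt_erf (x : ℝ) : HasDerivAt erf (2 / √π * exp (-x ^ 2)) x := by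
  have hcont : Continuous fun s : ℝ => exp (-s ^ 2) := by fun_prop
  exact (hcont.integral_hasStrictDerivAt 0 x).hasDerivAt.const_mul _

@[fun_prop]
theorem continuous_erf : Continuous erf :=
  continuous_iff_continuousAt.2 fun x => (hasDerivAt_erf x).continuousAt

theorem hasDerivAt_exp_neg_mul_sq_div_two (x t : ℝ) :
    HasDerivAt (fun t => exp (-(x * t) ^ 2 / 2)) (-(x ^ 2 * t) * exp (-(x * t) ^ 2 / 2)) t := by
  have h := ((((hasDerivAt_id' t).const_mul x).fun_pow 2).fun_neg.div_const 2).exp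
  refine h.congr_deriv ?_
  simp only [Nat.add_one_sub_one, pow_one, Nat.cast_ofNat]
  ring

theorem hasDerivAt_mul_erf_mul_div_sqrt_two (x t : ℝ) :
    HasDerivAt (fun t => x * erf (x * t / √2)) (√(2 / π) * x ^ 2 * exp (-(x * t) ^ 2 / 2)) t := by
  have h := ((hasDerivAt_erf (x * t / √2)).comp t
    (((hasDerivAt_id' t).const_mul x).div_const √2)).const_mul x
  refine h.congr_deriv ?_
  have h2 : √2 ^ 2 = 2 := sq_sqrt zero_le_two
  rw [div_pow, h2, sqrt_div' _ pi_pos.le, neg_div]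
  field_simp
  rw [h2]

section algInv

variable {a : ℝ}

theorem hasDerivAt_inv_sqrt_one_sub_sq_pow (n : ℕ) (ha : a ^ 2 < 1) :
    HasDerivAt (fun b => (√(1 - b ^ 2))⁻¹ ^ n) (n * a * (√(1 - a ^ 2))⁻¹ ^ (n + 2)) a := by
  have hpos : 0 < 1 - a ^ 2 := by linarith
  have hs : 0 < √(1 - a ^ 2) := sqrt_pos.2 hpos
  have hsq : HasDerivAt (fun b => √(1 - b ^ 2)) (-(2 * a) / (2 * √(1 - a ^ 2))) a := by
    simpa using ((hasDerivAt_pow 2 a).const_sub 1).sqrt hpos.ne'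
  refine ((hsq.fun_inv hs.ne').fun_pow n).congr_deriv ?_
  rcases n with _ | n
  · simp
  · simp only [Nat.add_sub_cancel, inv_pow]
    field_simp
    ring

theorem hasDerivAt_algInv (ha : a ^ 2 < 1) :
    HasDerivAt algInv ((√(1 - a ^ 2))⁻¹ ^ 3) a := by
  have hs : √(1 - a ^ 2) ^ 2 = 1 - a ^ 2 := sq_sqrt (by linarith)
  have hs0 : √(1 - a ^ 2) ≠ 0 := (sqrt_pos.2 (by linarith)).ne'
  have h := (hasDerivAt_id' a).fun_mul (by simpa using hasDerivAt_inv_sqrt_one_sub_sq_pow 1 ha)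
  refine (h.congr_of_eventuallyEq (Eventually.of_forall fun b => ?_)).congr_deriv ?_
  · simp [algInv, div_eq_mul_inv]
  · field_simp
    linear_combination hs

end algInv

section BoundedSupport

variable {μ : Measure ℝ} [IsFiniteMeasure μ] {K : Set ℝ}

theorem hasDerivAt_integral_mul_erf (hK : IsCompact K) (hμK : ∀ᵐ x ∂μ, x ∈ K) (t : ℝ) :
    HasDerivAt (fun t => ∫ x, x * erf (x * t / √2) ∂μ)
      (∫ x, √(2 / π) * x ^ 2 * exp (-(x * t) ^ 2 / 2) ∂μ) t :=
  hasDerivAt_integral_of_continuous_of_ae_mem_compact hK hμK (by fun_prop) (by fun_prop)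
    (fun t x => hasDerivAt_mul_erf_mul_div_sqrt_two x t) t

theorem hasDerivAt_integral_sq_mul_exp (hK : IsCompact K) (hμK : ∀ᵐ x ∂μ, x ∈ K) (t : ℝ) :
    HasDerivAt (fun t => ∫ x, √(2 / π) * x ^ 2 * exp (-(x * t) ^ 2 / 2) ∂μ)
      (∫ x, -√(2 / π) * x ^ 4 * t * exp (-(x * t) ^ 2 / 2) ∂μ) t :=
  hasDerivAt_integral_of_continuous_of_ae_mem_compact hK hμK
    (F' := fun t x => -√(2 / π) * x ^ 4 * t * exp (-(x * t) ^ 2 / 2))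
    (by fun_prop) (by fun_prop) (fun t x =>
      ((hasDerivAt_exp_neg_mul_sq_div_two x t).const_mul (√(2 / π) * x ^ 2)).congr_deriv
        (by ring)) t

theorem hasDerivAt_integral_pow_four_mul_exp (hK : IsCompact K) (hμK : ∀ᵐ x ∂μ, x ∈ K)
    (t : ℝ) :
    HasDerivAt (fun t => ∫ x, -√(2 / π) * x ^ 4 * t * exp (-(x * t) ^ 2 / 2) ∂μ)
      (∫ x, -√(2 / π) * x ^ 4 * (1 - (x * t) ^ 2) * exp (-(x * t) ^ 2 / 2) ∂μ) t :=
  hasDerivAt_integral_of_continuous_of_ae_mem_compact hK hμK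
    (F' := fun t x => -√(2 / π) * x ^ 4 * (1 - (x * t) ^ 2) * exp (-(x * t) ^ 2 / 2))
    (by fun_prop) (by fun_prop) (fun t x =>
      (((hasDerivAt_id' t).const_mul (-√(2 / π) * x ^ 4)).fun_mul
        (hasDerivAt_exp_neg_mul_sq_div_two x t)).congr_deriv (by ring)) t

end BoundedSupport

theorem amplifier_third_deriv_at_zero_general
    (μ : Measure ℝ) [IsProbabilityMeasure μ]
    (M : ℝ) (hbdd : ∀ᵐ x ∂μ, |x| ≤ M)
    (φ : ℝ → ℝ)
    (hφ : ∀ a ∈ Set.Ioo (-1 : ℝ) 1,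
      φ a = ∫ x, x * erf (x * algInv a / Real.sqrt 2) ∂μ) :
    iteratedDeriv 3 φ 0 = Real.sqrt (2 / π) * (3 * ∫ x, x ^ 2 ∂μ - ∫ x, x ^ 4 ∂μ) ∧
      ((∫ x, x ^ 2 ∂μ) = 1 →
        (0 < iteratedDeriv 3 φ 0 ↔ (∫ x, x ^ 4 ∂μ) - 3 < 0)) := by
  have hK : ∀ᵐ x ∂μ, x ∈ Icc (-M) M := hbdd.mono fun x => abs_le.1
  have hsq : ∀ᶠ b in 𝓝 (0 : ℝ), b ^ 2 < 1 :=
    (continuous_pow 2).continuousAt.eventually_lt continuousAt_const (by norm_num)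
  have hφψ : φ =ᶠ[𝓝 0] (fun t => ∫ x, x * erf (x * t / √2) ∂μ) ∘ algInv := by
    filter_upwards [Ioo_mem_nhds (by norm_num : (-1 : ℝ) < 0) one_pos] with a ha using hφ a ha
  have halgInv''' := ((hasDerivAt_id' (0 : ℝ)).const_mul ((3 : ℕ) : ℝ)).fun_mul
    (hasDerivAt_inv_sqrt_one_sub_sq_pow 5 (by norm_num : (0 : ℝ) ^ 2 < 1))
  have h3 : iteratedDeriv 3 φ 0 = √(2 / π) * (3 * ∫ x, x ^ 2 ∂μ - ∫ x, x ^ 4 ∂μ) := by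
    rw [(hφψ.iteratedDeriv 3).eq_of_nhds, iteratedDeriv_three_comp
      (Eventually.of_forall (hasDerivAt_integral_mul_erf isCompact_Icc hK))
      (Eventually.of_forall (hasDerivAt_integral_sq_mul_exp isCompact_Icc hK))
      (hasDerivAt_integral_pow_four_mul_exp isCompact_Icc hK _)
      (hsq.mono fun b => hasDerivAt_algInv)
      (hsq.mono fun b => hasDerivAt_inv_sqrt_one_sub_sq_pow 3) halgInv''']
    simp only [algInv, sqrt_div, neg_mul, ne_eq, OfNat.ofNat_ne_zero, not_false_eq_true,
      zero_pow, sub_zero, sqrt_one, div_one, mul_zero, mul_one, neg_zero, zero_div, exp_zero,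
      integral_neg, integral_const_mul, inv_one, one_pow, integral_zero, Nat.cast_ofNat,
      Nat.reduceAdd, add_zero, Nat.ofNat_nonneg]
    ring
  refine ⟨h3, fun h2 => ?_⟩
  rw [h3, h2, mul_pos_iff_of_pos_left (sqrt_pos.2 (div_pos two_pos pi_pos))]
  constructor <;> intro h <;> linarith

theorem amplifier_third_deriv_at_zero
    (μ : Measure ℝ) [IsProbabilityMeasure μ]
    (M : ℝ) (hbdd : ∀ᵐ x ∂μ, |x| ≤ M)
    (hsymm : Measure.map (fun x : ℝ => -x) μ = μ)
    (φ : ℝ → ℝ)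
    (hφ : ∀ a ∈ Set.Ioo (-1 : ℝ) 1,
      φ a = ∫ x, x * erf (x * algInv a / Real.sqrt 2) ∂μ) :
    iteratedDeriv 3 φ 0 = Real.sqrt (2 / π) * (3 * ∫ x, x ^ 2 ∂μ - ∫ x, x ^ 4 ∂μ) ∧
      ((∫ x, x ^ 2 ∂μ) = 1 →
        (0 < iteratedDeriv 3 φ 0 ↔ (∫ x, x ^ 4 ∂μ) - 3 < 0)) :=
  amplifier_third_deriv_at_zero_general μ M hbdd φ hφ
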